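/- Knight's identity: for τ ∈ (0,1) and real numbers e and u, ρ_τ(e - u) - ρ_τ(e) = -u·ψ_τ(e) + ∫₀ᵘ (I(e ≤ s) - I(e ≤ 0)) ds, where ρ_τ(r) = r(τ - I(r < 0)) and ψ_τ(x) = τ - I(x ≤ 0). -/
import Mathlib

open MeasureTheory intervalIntegral

lemma ind_mono (e : ℝ) : Monotone (fun s => if e ≤ s then (1:ℝ) else 0) := by
  intro x y hxy
  by_cases h : e ≤ x <;> by_cases h' : e ≤ y <;> simp [h, h'] <;> linarith

lemma ind_intble (e a b : ℝ) :
    IntervalIntegrable (fun s => if e ≤ s then (1:ℝ) else 0) volume a b :=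
  (ind_mono e).intervalIntegrable

lemma seg_const (e a b c : ℝ) (h : ∀ᵐ s ∂(volume : Measure ℝ), s ∈ Set.uIoc a b →
    (if e ≤ s then (1:ℝ) else 0) = c) :
    ∫ s in a..b, (if e ≤ s then (1:ℝ) else 0) = c * (b - a) := by
  rw [intervalIntegral.integral_congr_ae h]
  simp [mul_comm]

lemma seg_one (e a b : ℝ) (h : ∀ s ∈ Set.uIoc a b, e ≤ s) :
    ∫ s in a..b, (if e ≤ s then (1:ℝ) else 0) = b - a := by
  have := seg_const e a b 1 (Filter.Eventually.of_forall (fun s hs => by simp [h s hs]))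
  simpa using this

lemma seg_zero (e a b : ℝ) (h : ∀ s ∈ Set.uIoc a b, s ≤ e) :
    ∫ s in a..b, (if e ≤ s then (1:ℝ) else 0) = 0 := by
  have h0 : ∀ᵐ s ∂(volume : Measure ℝ), s ≠ e := by
    rw [MeasureTheory.ae_iff]
    simpa using measure_singleton e ▸ (by simp : (volume {e} : ENNReal) = 0)
  have := seg_const e a b 0 (by
    filter_upwards [h0] with s hs hmem
    have := h s hmem
    have : ¬ e ≤ s := fun hle => hs (le_antisymm this hle)
    simp [this])
  simpa using this

lemma key (e u : ℝ) : ∫ s in (0:ℝ)..u, (if e ≤ s then (1:ℝ) else 0)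
    = max (u - e) 0 - max (-e) 0 := by
  rcases le_total 0 u with hu | hu
  · rcases le_total e 0 with he | he
    · rw [seg_one e 0 u (fun s hs => le_trans he (Set.uIoc_of_le hu ▸ hs).1.le)]
      rw [max_eq_left (by linarith), max_eq_left (by linarith)]; ring
    · rcases le_total e u with heu | heu
      · have split : (∫ s in (0:ℝ)..e, (if e ≤ s then (1:ℝ) else 0))
            + (∫ s in e..u, (if e ≤ s then (1:ℝ) else 0))
            = ∫ s in (0:ℝ)..u, (if e ≤ s then (1:ℝ) else 0) :=
          intervalIntegral.integral_add_adjacent_intervals (ind_intble e 0 e) (ind_intble e e u)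
        rw [← split, seg_zero e 0 e (fun s hs => (Set.uIoc_of_le he ▸ hs).2),
          seg_one e e u (fun s hs => (Set.uIoc_of_le heu ▸ hs).1.le)]
        rw [max_eq_left (by linarith), max_eq_right (by linarith)]; ring
      · rw [seg_zero e 0 u (fun s hs => le_trans (Set.uIoc_of_le hu ▸ hs).2 heu)]
        rw [max_eq_right (by linarith), max_eq_right (by linarith)]; ring
  · rcases le_total e u with he | he
    · rw [seg_one e 0 u (fun s hs => le_trans he (Set.uIoc_of_ge hu ▸ hs).1.le)]
      rw [max_eq_left (by linarith), max_eq_left (by linarith)]; ring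
    · rcases le_total e 0 with he0 | he0
      · have split : (∫ s in (0:ℝ)..e, (if e ≤ s then (1:ℝ) else 0))
            + (∫ s in e..u, (if e ≤ s then (1:ℝ) else 0))
            = ∫ s in (0:ℝ)..u, (if e ≤ s then (1:ℝ) else 0) :=
          intervalIntegral.integral_add_adjacent_intervals (ind_intble e 0 e) (ind_intble e e u)
        rw [← split, seg_one e 0 e (fun s hs => (Set.uIoc_of_ge he0 ▸ hs).1.le),
          seg_zero e e u (fun s hs => (Set.uIoc_of_ge he ▸ hs).2)]
        rw [max_eq_right (by linarith), max_eq_left (by linarith)]; ring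
      · rw [seg_zero e 0 u (fun s hs => le_trans (Set.uIoc_of_ge hu ▸ hs).2 he0)]
        rw [max_eq_right (by linarith : u - e ≤ 0), max_eq_right (by linarith : -e ≤ 0)]; ring

noncomputable def rho (τ r : ℝ) : ℝ := r * (τ - if r < 0 then 1 else 0)

noncomputable def psi (τ x : ℝ) : ℝ := τ - if x ≤ 0 then 1 else 0

theorem knight_identity (τ : ℝ) (hτ : τ ∈ Set.Ioo (0:ℝ) 1) (e u : ℝ) :
    rho τ (e - u) - rho τ e
      = -u * psi τ e
        + ∫ s in (0:ℝ)..u, ((if e ≤ s then (1:ℝ) else 0) - (if e ≤ 0 then (1:ℝ) else 0)) := by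
  have hsub : (∫ s in (0:ℝ)..u, ((if e ≤ s then (1:ℝ) else 0) - (if e ≤ 0 then (1:ℝ) else 0)))
      = (∫ s in (0:ℝ)..u, (if e ≤ s then (1:ℝ) else 0)) - u * (if e ≤ 0 then (1:ℝ) else 0) := by
    rw [intervalIntegral.integral_sub (ind_intble e 0 u) intervalIntegrable_const]
    simp
  have hrho : ∀ r : ℝ, rho τ r = r * τ + max (-r) 0 := by
    intro r
    by_cases h : r < 0
    · rw [rho, if_pos h, max_eq_left (by linarith : (0:ℝ) ≤ -r)]; ring
    · rw [rho, if_neg h, max_eq_right (by simpa using not_lt.mp h : -r ≤ 0)]; ring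
  rw [hsub, key, hrho, hrho, psi]
  ring
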